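/- For every finite binary sequence s ∈ {0,1}^{<ℕ}, the identity x_s² = x_{s0} x_s x_{s1} holds in Homeo(C) (products acting on the right). -/

import Mathlib

/-- The Cantor set of infinite binary sequences. -/
abbrev Cantor : Type := ℕ → Bool

/-- Concatenation of a finite binary sequence with an infinite binary sequence. -/
def cat (s : List Bool) (η : Cantor) : Cantor :=
  fun n => if h : n < s.length then s.get ⟨n, h⟩ else η (n - s.length)

/-- `s` is a (finite) prefix of the infinite sequence `ξ`. -/
def IsPrefixOf (s : List Bool) (ξ : Cantor) : Prop := ∃ η : Cantor, ξ = cat s η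

/-- The group of self-homeomorphisms of a topological space, with
`(f * g) ξ = f (g ξ)` (i.e. in the right-action convention `ξ·(g h) = (ξ·g)·h`,
the product `g * f` corresponds to the word "apply `f`, then `g`"). -/
instance {α : Type*} [TopologicalSpace α] : Group (α ≃ₜ α) where
  mul f g := g.trans f
  one := Homeomorph.refl α
  inv := Homeomorph.symm
  mul_assoc _ _ _ := Homeomorph.ext fun _ => rfl
  one_mul _ := Homeomorph.ext fun _ => rfl
  mul_one _ := Homeomorph.ext fun _ => rfl
  inv_mul_cancel f := Homeomorph.ext fun ξ => f.symm_apply_apply ξ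

@[simp] lemma homeo_mul_apply {α : Type*} [TopologicalSpace α] (f g : α ≃ₜ α) (ξ : α) :
    (f * g) ξ = f (g ξ) := rfl

@[simp] lemma homeo_one_apply {α : Type*} [TopologicalSpace α] (ξ : α) :
    (1 : α ≃ₜ α) ξ = ξ := rfl

@[simp] lemma homeo_inv_apply {α : Type*} [TopologicalSpace α] (f : α ≃ₜ α) (ξ : α) :
    (f⁻¹ : α ≃ₜ α) ξ = f.symm ξ := rfl

/-- The data of the basic homeomorphisms `x`, `y`, `x_s`, `y_s`, `p_n` of the Cantor
set, together with their recursive defining equations. -/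
structure LMData where
  x : Cantor ≃ₜ Cantor
  y : Cantor ≃ₜ Cantor
  xx : List Bool → Cantor ≃ₜ Cantor
  yy : List Bool → Cantor ≃ₜ Cantor
  p : ℕ → Cantor ≃ₜ Cantor
  hx00 : ∀ η, x (cat [false, false] η) = cat [false] η
  hx01 : ∀ η, x (cat [false, true] η) = cat [true, false] η
  hx1 : ∀ η, x (cat [true] η) = cat [true, true] η
  hy00 : ∀ η, y (cat [false, false] η) = cat [false] (y η)
  hy01 : ∀ η, y (cat [false, true] η) = cat [true, false] (y.symm η)
  hy1 : ∀ η, y (cat [true] η) = cat [true, true] (y η)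
  hxx : ∀ s η, xx s (cat s η) = cat s (x η)
  hxx' : ∀ s ξ, ¬ IsPrefixOf s ξ → xx s ξ = ξ
  hyy : ∀ s η, yy s (cat s η) = cat s (y η)
  hyy' : ∀ s ξ, ¬ IsPrefixOf s ξ → yy s ξ = ξ
  hp1 : ∀ n k η, k < n → p n (cat (List.replicate k true ++ [false]) η) =
      cat (List.replicate (k + 1) true ++ [false]) η
  hp2 : ∀ n η, p n (cat (List.replicate n true ++ [false]) η) =
      cat (List.replicate (n + 1) true) η
  hp3 : ∀ n η, p n (cat (List.replicate (n + 1) true) η) = cat [false] η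

/-- Thompson's group `T`, generated by all `x_s` and all `p_n`. -/
def Tgrp (D : LMData) : Subgroup (Cantor ≃ₜ Cantor) :=
  Subgroup.closure (Set.range D.xx ∪ Set.range D.p)

/-- The group `Ŝ`, generated by all `x_s`, all `y_s` and all `p_n`. -/
def Shat (D : LMData) : Subgroup (Cantor ≃ₜ Cantor) :=
  Subgroup.closure (Set.range D.xx ∪ Set.range D.yy ∪ Set.range D.p)

/-- The homeomorphism `y₁₀ y₁₁₀⁻¹` (right-action word: first `y₁₀`, then `y₁₁₀⁻¹`). -/
def sgen (D : LMData) : Cantor ≃ₜ Cantor :=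
  (D.yy [true, true, false])⁻¹ * D.yy [true, false]

/-- The group `S`, generated by Thompson's group `T` together with `y₁₀ y₁₁₀⁻¹`. -/
def Sgrp (D : LMData) : Subgroup (Cantor ≃ₜ Cantor) :=
  Subgroup.closure (↑(Tgrp D) ∪ {sgen D})

/-- The Lodha–Moore group `_yG_y`, generated by all `x_s` and all `y_s`. -/
def LMgrp (D : LMData) : Subgroup (Cantor ≃ₜ Cantor) :=
  Subgroup.closure (Set.range D.xx ∪ Set.range D.yy)

/-! `x_s` acts on the cone `sC` as `x` acts on `C`, and more generally `x_{st}` acts there as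
`x_t`, so the identity for `s` is the identity `x² = x₀ x x₁` for the empty word transported
to `sC`; off `sC` all three maps are the identity. The root identity is checked on the eight
cylinders of length three. -/

@[simp] lemma cat_nil (η : Cantor) : cat [] η = η := by
  funext n
  simp [cat]

lemma cat_append (s t : List Bool) (η : Cantor) : cat (s ++ t) η = cat s (cat t η) := by
  funext n
  simp only [cat, List.length_append, List.get_eq_getElem]
  by_cases hs : n < s.length
  · simp [hs, List.getElem_append_left, show n < s.length + t.length by omega]
  · by_cases ht : n < s.length + t.length
    · simp [hs, ht, show n - s.length < t.length by omega,
        List.getElem_append_right (not_lt.1 hs)]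
    · simp only [hs, ht, dite_false, show ¬ n - s.length < t.length by omega]
      congr 1
      omega

lemma cat_apply_length_add (s : List Bool) (η : Cantor) (n : ℕ) :
    cat s η (s.length + n) = η n := by
  simp [cat]

lemma cat_injective (s : List Bool) : Function.Injective (cat s) := fun η ζ h =>
  funext fun n => by rw [← cat_apply_length_add s η n, h, cat_apply_length_add]

lemma exists_eq_cat (η : Cantor) (n : ℕ) : ∃ s ζ, s.length = n ∧ η = cat s ζ := by
  refine ⟨List.ofFn fun i : Fin n => η i, fun k => η (n + k), by simp, funext fun k => ?_⟩
  by_cases hk : k < n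
  · simp [cat, hk]
  · simp [cat, hk, show n + (k - n) = k by omega]

lemma IsPrefixOf.of_append {s t : List Bool} {ξ : Cantor} (h : IsPrefixOf (s ++ t) ξ) :
    IsPrefixOf s ξ := by
  obtain ⟨η, rfl⟩ := h
  exact ⟨cat t η, cat_append s t η⟩

namespace LMData

variable (D : LMData)

lemma xx_nil : D.xx [] = D.x :=
  Homeomorph.ext fun η => by simpa using D.hxx [] η

lemma xx_append_cat (s t : List Bool) (η : Cantor) :
    D.xx (s ++ t) (cat s η) = cat s (D.xx t η) := by
  by_cases ht : IsPrefixOf t η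
  · obtain ⟨ζ, rfl⟩ := ht
    rw [← cat_append, D.hxx, D.hxx, cat_append]
  · have hst : ¬ IsPrefixOf (s ++ t) (cat s η) := by
      rintro ⟨ζ, hζ⟩
      exact ht ⟨ζ, cat_injective s (hζ.trans (cat_append s t ζ))⟩
    rw [D.hxx' _ _ hst, D.hxx' _ _ ht]

lemma x_cat_false_false (u : List Bool) (η : Cantor) :
    D.x (cat (false :: false :: u) η) = cat (false :: u) η := by
  simpa [← cat_append] using D.hx00 (cat u η)

lemma x_cat_false_true (u : List Bool) (η : Cantor) :
    D.x (cat (false :: true :: u) η) = cat (true :: false :: u) η := by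
  simpa [← cat_append] using D.hx01 (cat u η)

lemma x_cat_true (u : List Bool) (η : Cantor) :
    D.x (cat (true :: u) η) = cat (true :: true :: u) η := by
  simpa [← cat_append] using D.hx1 (cat u η)

lemma xx_singleton_cat_cons (b : Bool) (u : List Bool) (η : Cantor) :
    D.xx [b] (cat (b :: u) η) = cat [b] (D.x (cat u η)) := by
  simpa [← cat_append] using D.hxx [b] (cat u η)

lemma xx_singleton_cat_cons_of_ne {b c : Bool} (hcb : c ≠ b) (u : List Bool) (η : Cantor) :
    D.xx [b] (cat (c :: u) η) = cat (c :: u) η := by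
  refine D.hxx' _ _ fun ⟨ζ, hζ⟩ => hcb ?_
  simpa [cat] using congrFun hζ 0

lemma x_mul_x : D.x * D.x = D.xx [true] * D.x * D.xx [false] := by
  refine Homeomorph.ext fun η => ?_
  obtain ⟨s, ζ, hs, rfl⟩ := exists_eq_cat η 3
  match s, hs with
  | [a, b, c], _ =>
    cases a <;> cases b <;> cases c <;>
      simp [x_cat_false_false, x_cat_false_true, x_cat_true, xx_singleton_cat_cons,
        xx_singleton_cat_cons_of_ne, ← cat_append]

end LMData

/-- `x_s² = x_{s0} x_s x_{s1}` (right-action words; in composition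
order the right-hand side is `x_{s1} ∘ x_s ∘ x_{s0}`). -/
theorem statement14 (D : LMData) (s : List Bool) :
    D.xx s * D.xx s = D.xx (s ++ [true]) * D.xx s * D.xx (s ++ [false]) := by
  refine Homeomorph.ext fun ξ => ?_
  by_cases hξ : IsPrefixOf s ξ
  · obtain ⟨η, rfl⟩ := hξ
    have root := congrArg (fun f : Cantor ≃ₜ Cantor => f η) D.x_mul_x
    simp only [homeo_mul_apply] at root ⊢
    rw [D.hxx, D.hxx, D.xx_append_cat, D.hxx, D.xx_append_cat, root]
  · have hξb (b : Bool) : ¬ IsPrefixOf (s ++ [b]) ξ := fun h => hξ h.of_append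
    simp only [homeo_mul_apply, D.hxx' _ _ hξ, D.hxx' _ _ (hξb _)]
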